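/- For every integer n ≥ 2 and every integer k with 2 ≤ k ≤ n, the number of type-B permutation tableaux of size n whose (k-1)-th and k-th border steps are both west steps equals (k/n - 3/(2n) + (n-k+1)^2/(4n(n-1)))·|B_n|; equivalently, for a uniformly random type-B permutation tableau of size n, the probability that steps k-1 and k are both west steps is k/n - 3/(2n) + (n-k+1)^2/(4n(n-1)). -/

import Mathlib

/-- A type-B permutation tableau of size `n`, encoded via its border steps and filling.

Border steps are indexed by `Fin n` (index `i` is the `(i+1)`-th step from the
northeast corner); `west i = true` means the `(i+1)`-th step is a west step
(giving a column) and `west i = false` means it is a south step (giving a row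
of the original, unshifted diagram).

Rows of the shifted diagram are also indexed by `Fin n`: a south step `r` indexes
the corresponding original row, and a west step `r` indexes the inserted diagonal
row whose diagonal cell lies in the column of `r`.  The cell in row `r` and the
column of a west step `c` exists iff (`r` is south and `r < c`) or (`r` is west
and `r ≤ c`); in particular the diagonal cell of the column of `c` is `(c, c)`.
Columns are ordered left-to-right by decreasing step index, rows top-to-bottom as:
diagonal rows by decreasing step index, then original rows by increasing step index.

`filling r c = true` means the cell `(r, c)` contains a 1; `filling` is `false`
outside the cells of the diagram (field `support`).  The fields `col_one`,
`no_bad_zero` and `diag_zero` are the three defining conditions of a type-B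
permutation tableau. -/
structure TypeBTableau (n : ℕ) where
  west : Fin n → Bool
  filling : Fin n → Fin n → Bool
  support : ∀ r c : Fin n, filling r c = true →
    west c = true ∧ ((west r = false ∧ (r : ℕ) < (c : ℕ)) ∨ (west r = true ∧ (r : ℕ) ≤ (c : ℕ)))
  col_one : ∀ c : Fin n, west c = true → ∃ r : Fin n, filling r c = true
  no_bad_zero : ∀ r c : Fin n,
    (west c = true ∧ ((west r = false ∧ (r : ℕ) < (c : ℕ)) ∨ (west r = true ∧ (r : ℕ) ≤ (c : ℕ)))) →
    filling r c = false →
    ¬((∃ r' : Fin n,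
        ((west r' = true ∧ west r = false) ∨
         (west r' = true ∧ west r = true ∧ (r : ℕ) < (r' : ℕ)) ∨
         (west r' = false ∧ west r = false ∧ (r' : ℕ) < (r : ℕ))) ∧
        filling r' c = true) ∧
      (∃ c' : Fin n, (c : ℕ) < (c' : ℕ) ∧ filling r c' = true))
  diag_zero : ∀ j : Fin n, west j = true → filling j j = false →
    ∀ c : Fin n, filling j c = false

namespace TypeBTableau

noncomputable instance instFintype {n : ℕ} : Fintype (TypeBTableau n) :=
  Fintype.ofInjective (fun T => (T.west, T.filling)) (by
    rintro ⟨w1, f1, _, _, _, _⟩ ⟨w2, f2, _, _, _, _⟩ h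
    simp only [Prod.mk.injEq] at h
    obtain ⟨h1, h2⟩ := h
    subst h1; subst h2; rfl)

end TypeBTableau

open Finset

open scoped Nat

/-! Deleting the last border step maps a tableau of size `n + 1` onto one of size `n`. A tableau
`T` has one extension by a south step, and its extensions by a west step are given by the new
(leftmost) column, whose 1s other than the diagonal one may sit exactly in the unrestricted rows
of `T`. Following the number `u` of unrestricted rows through this extension, the extensions of
`T` contribute `2y(1 + y)^u(T)` to `∑ y^u`, the south one alone `y^(u(T) + 1)`. Hence
`G_n(y) = ∑_{T ∈ B_n} y^u(T)` satisfies `G_(n+1)(y) = 2y G_n(1 + y)`, so that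
`G_n(y) = 2^n y(y + 1)⋯(y + n - 1)` and `|B_n| = G_n(1) = 2^n n!`. Conditioning the steps `k - 1`
and `k` to be west and summing freely over the later steps gives the count in closed form. -/

theorem Fin.card_filter_univ_castSucc {n : ℕ} (p : Fin (n + 1) → Prop) [DecidablePred p] :
    #{x | p x} = #{x : Fin n | p x.castSucc} + if p (Fin.last n) then 1 else 0 := by
  simp only [card_filter, Fin.sum_univ_castSucc]

theorem Finset.sum_powerset_pow_card_add_card_above {α β R : Type*} [DecidableEq α]
    [LinearOrder β] [CommSemiring R] {f : α → β} (hf : Function.Injective f) (s : Finset α)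
    (y : R) :
    ∑ A ∈ s.powerset, y ^ (#A + (#{x ∈ s | ∀ b ∈ A, f b < f x} + if A = ∅ then 1 else 0)) =
      y * (1 + y) ^ #s := by
  induction s using Finset.induction_on_max_value f with
  | empty => simp
  | insert a s ha hmax ih =>
    have hlt : ∀ b ∈ s, f b < f a := fun b hb =>
      (hmax b hb).lt_of_ne (hf.ne (ne_of_mem_of_not_mem hb ha))
    have h_old : ∀ A ∈ s.powerset,
        #{x ∈ insert a s | ∀ b ∈ A, f b < f x} = #{x ∈ s | ∀ b ∈ A, f b < f x} + 1 := by
      intro A hA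
      rw [filter_insert, if_pos fun b hb => hlt b (mem_powerset.mp hA hb),
        card_insert_of_notMem (fun h => ha (mem_filter.mp h).1)]
    have h_new : ∀ A : Finset α, #{x ∈ insert a s | ∀ b ∈ insert a A, f b < f x} = 0 := by
      intro A
      refine card_eq_zero.mpr (filter_eq_empty_iff.mpr fun x hx h => ?_)
      have hax := h a (mem_insert_self a A)
      rcases mem_insert.mp hx with rfl | hx
      · exact lt_irrefl _ hax
      · exact (hlt x hx).not_gt hax
    rw [sum_powerset_insert ha, card_insert_of_notMem ha]
    calc ∑ A ∈ s.powerset, y ^ (#A + (#{x ∈ insert a s | ∀ b ∈ A, f b < f x} +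
            if A = ∅ then 1 else 0)) +
          ∑ A ∈ s.powerset, y ^ (#(insert a A) +
            (#{x ∈ insert a s | ∀ b ∈ insert a A, f b < f x} +
              if insert a A = ∅ then 1 else 0))
        = y * ∑ A ∈ s.powerset, y ^ (#A + (#{x ∈ s | ∀ b ∈ A, f b < f x} +
            if A = ∅ then 1 else 0)) + y * ∑ A ∈ s.powerset, y ^ #A * 1 ^ (#s - #A) := by
          rw [mul_sum, mul_sum]
          congr 1 <;> refine sum_congr rfl fun A hA => ?_
          · rw [h_old A hA]; ring
          · rw [h_new, card_insert_of_notMem fun h => ha (mem_powerset.mp hA h),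
              if_neg (insert_ne_empty a A)]
            ring
      _ = y * (1 + y) ^ (#s + 1) := by rw [ih, sum_pow_mul_eq_add_pow]; ring

namespace TypeBTableau

variable {n : ℕ}

@[ext]
theorem ext {T T' : TypeBTableau n} (hw : T.west = T'.west) (hf : T.filling = T'.filling) :
    T = T' := by
  cases T; cases T'; simp_all

def IsCell (w : Fin n → Bool) (r c : Fin n) : Prop :=
  w c = true ∧ ((w r = false ∧ (r : ℕ) < c) ∨ (w r = true ∧ (r : ℕ) ≤ c))

instance (w : Fin n → Bool) (r c : Fin n) : Decidable (IsCell w r c) := by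
  unfold IsCell; infer_instance

/-- Larger height means higher in the shifted diagram. -/
def rowHeight (w : Fin n → Bool) (r : Fin n) : ℤ :=
  if w r then ((r : ℕ) : ℤ) + 1 else -((r : ℕ) : ℤ)

theorem rowHeight_injective (w : Fin n → Bool) : Function.Injective (rowHeight w) := by
  intro r r' h
  unfold rowHeight at h
  split_ifs at h <;> omega

theorem rowHeight_lt_rowHeight_iff (w : Fin n → Bool) (r' r : Fin n) :
    rowHeight w r < rowHeight w r' ↔
      (w r' = true ∧ w r = false) ∨ (w r' = true ∧ w r = true ∧ (r : ℕ) < r') ∨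
        (w r' = false ∧ w r = false ∧ (r' : ℕ) < r) := by
  unfold rowHeight
  cases w r <;> cases w r' <;> simp; omega

@[simp]
theorem rowHeight_snoc_castSucc (w : Fin n → Bool) (b : Bool) (r : Fin n) :
    rowHeight (Fin.snoc w b : Fin (n + 1) → Bool) r.castSucc = rowHeight w r := by
  simp [rowHeight]

@[simp]
theorem isCell_snoc_castSucc (w : Fin n → Bool) (b : Bool) (r c : Fin n) :
    IsCell (Fin.snoc w b : Fin (n + 1) → Bool) r.castSucc c.castSucc ↔ IsCell w r c := by
  simp [IsCell]

theorem not_isCell_last_castSucc (w : Fin (n + 1) → Bool) (c : Fin n) :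
    ¬ IsCell w (Fin.last n) c.castSucc := by
  simp only [IsCell, Fin.val_last, Fin.val_castSucc]
  omega

theorem isCell_castSucc_last (w : Fin (n + 1) → Bool) (hw : w (Fin.last n) = true)
    (r : Fin n) : IsCell w r.castSucc (Fin.last n) := by
  have := r.isLt
  simp only [IsCell, hw, Fin.val_castSucc, Fin.val_last, true_and]
  cases w r.castSucc <;> simp

theorem rowHeight_lt_rowHeight_last (w : Fin (n + 1) → Bool) (hw : w (Fin.last n) = true)
    {r : Fin (n + 1)} (hr : r ≠ Fin.last n) : rowHeight w r < rowHeight w (Fin.last n) := by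
  have := Fin.val_lt_last hr
  simp only [rowHeight, hw, Fin.val_last]
  split_ifs <;> omega

theorem filling_last_castSucc (T : TypeBTableau (n + 1)) (c : Fin n) :
    T.filling (Fin.last n) c.castSucc = false := by
  by_contra h
  exact not_isCell_last_castSucc T.west c (T.support _ _ (by simpa using h))

theorem filling_above_eq_false (T : TypeBTableau n) {r c r' c' : Fin n}
    (hcell : IsCell T.west r c) (h0 : T.filling r c = false)
    (hr' : rowHeight T.west r < rowHeight T.west r') (hc' : c < c')
    (h1 : T.filling r c' = true) : T.filling r' c = false := by
  by_contra h
  exact T.no_bad_zero r c hcell h0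
    ⟨⟨r', (rowHeight_lt_rowHeight_iff _ _ _).mp hr', by simpa using h⟩, ⟨c', hc', h1⟩⟩

/-- A row is unrestricted when a 1 may be put into it in a new leftmost column: its diagonal
cell, if any, holds a 1, and none of its 0s has a 1 above it. -/
def IsUnrestricted (T : TypeBTableau n) (r : Fin n) : Prop :=
  (T.west r = true → T.filling r r = true) ∧
    ∀ c r', IsCell T.west r c → T.filling r c = false →
      rowHeight T.west r < rowHeight T.west r' → T.filling r' c = false

instance (T : TypeBTableau n) : DecidablePred T.IsUnrestricted := fun r => by
  unfold IsUnrestricted; infer_instance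

def unrestrictedRows (T : TypeBTableau n) : Finset (Fin n) := {r | T.IsUnrestricted r}

@[simp]
theorem mem_unrestrictedRows {T : TypeBTableau n} {r : Fin n} :
    r ∈ T.unrestrictedRows ↔ T.IsUnrestricted r := by
  simp [unrestrictedRows]

def dropLast (T : TypeBTableau (n + 1)) : TypeBTableau n where
  west r := T.west r.castSucc
  filling r c := T.filling r.castSucc c.castSucc
  support r c h := by simpa [IsCell] using T.support _ _ h
  col_one c hc := by
    obtain ⟨r, hr⟩ := T.col_one c.castSucc hc
    cases r using Fin.lastCases with
    | last => simp [filling_last_castSucc] at hr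
    | cast r => exact ⟨r, hr⟩
  no_bad_zero r c hcell h0 := by
    rintro ⟨⟨r', hr', h1⟩, ⟨c', hc', h2⟩⟩
    exact T.no_bad_zero r.castSucc c.castSucc (by simpa using hcell) h0
      ⟨⟨r'.castSucc, by simpa using hr', h1⟩, ⟨c'.castSucc, by simpa using hc', h2⟩⟩
  diag_zero j hj h0 c := T.diag_zero j.castSucc hj h0 c.castSucc

@[simp]
theorem dropLast_west (T : TypeBTableau (n + 1)) (r : Fin n) :
    T.dropLast.west r = T.west r.castSucc := rfl

theorem rowHeight_dropLast (T : TypeBTableau (n + 1)) (r : Fin n) :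
    rowHeight T.dropLast.west r = rowHeight T.west r.castSucc := rfl

theorem isCell_dropLast (T : TypeBTableau (n + 1)) (r c : Fin n) :
    IsCell T.dropLast.west r c ↔ IsCell T.west r.castSucc c.castSucc := Iff.rfl

@[simp]
theorem dropLast_filling (T : TypeBTableau (n + 1)) (r c : Fin n) :
    T.dropLast.filling r c = T.filling r.castSucc c.castSucc := rfl

/-- The column of a new last west step: `d` in its diagonal cell and 1s exactly in the rows
of `A`. -/
def newColumn (d : Bool) (A : Finset (Fin n)) : Fin (n + 1) → Bool :=
  Fin.snoc (fun r => decide (r ∈ A)) d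

@[simp]
theorem newColumn_last (d : Bool) (A : Finset (Fin n)) : newColumn d A (Fin.last n) = d := by
  simp [newColumn]

@[simp]
theorem newColumn_castSucc (d : Bool) (A : Finset (Fin n)) (r : Fin n) :
    newColumn d A r.castSucc = decide (r ∈ A) := by
  simp [newColumn]

def extendFilling (F : Fin n → Fin n → Bool) (col : Fin (n + 1) → Bool) (r c : Fin (n + 1)) :
    Bool :=
  Fin.lastCases (col r) (fun c => Fin.lastCases false (F · c) r) c

@[simp]
theorem extendFilling_castSucc_castSucc (F : Fin n → Fin n → Bool) (col : Fin (n + 1) → Bool)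
    (r c : Fin n) : extendFilling F col r.castSucc c.castSucc = F r c := by
  simp [extendFilling]

@[simp]
theorem extendFilling_last_castSucc (F : Fin n → Fin n → Bool) (col : Fin (n + 1) → Bool)
    (c : Fin n) : extendFilling F col (Fin.last n) c.castSucc = false := by
  simp [extendFilling]

@[simp]
theorem extendFilling_apply_last (F : Fin n → Fin n → Bool) (col : Fin (n + 1) → Bool)
    (r : Fin (n + 1)) : extendFilling F col r (Fin.last n) = col r := by
  simp [extendFilling]

/-- Appending a last step: a south step when `d = false` and `A = ∅`, otherwise a west step
whose column is `newColumn d A`. -/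
def snoc (T : TypeBTableau n) (d : Bool) (A : Finset (Fin n)) (hA : A ⊆ T.unrestrictedRows) :
    TypeBTableau (n + 1) where
  west := Fin.snoc T.west (d || decide A.Nonempty)
  filling := extendFilling T.filling (newColumn d A)
  support r c h := by
    change IsCell _ r c
    cases c using Fin.lastCases with
    | last =>
      cases r using Fin.lastCases with
      | last => simp_all [IsCell]
      | cast r =>
        simp only [extendFilling_apply_last, newColumn_castSucc, decide_eq_true_eq] at h
        simp only [IsCell, Fin.snoc_last, Fin.snoc_castSucc, Fin.val_castSucc, Fin.val_last]
        have hne : A.Nonempty := ⟨r, h⟩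
        cases T.west r <;> simp [r.isLt, hne]
    | cast c =>
      cases r using Fin.lastCases with
      | last => simp at h
      | cast r => exact (isCell_snoc_castSucc ..).mpr (T.support r c (by simpa using h))
  col_one c hc := by
    cases c using Fin.lastCases with
    | last =>
      simp only [Fin.snoc_last, Bool.or_eq_true, decide_eq_true_eq] at hc
      rcases hc with hd | ⟨r, hr⟩
      · exact ⟨Fin.last n, by simpa⟩
      · exact ⟨r.castSucc, by simpa⟩
    | cast c =>
      obtain ⟨r, hr⟩ := T.col_one c (by simpa using hc)
      exact ⟨r.castSucc, by simpa⟩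
  no_bad_zero r c hcell h0 := by
    rintro ⟨⟨r', hr', h1⟩, ⟨c', hc', h2⟩⟩
    change IsCell _ r c at hcell
    rw [← rowHeight_lt_rowHeight_iff] at hr'
    cases c using Fin.lastCases with
    | last => exact absurd c'.isLt (by simp only [Fin.val_last] at hc'; omega)
    | cast c =>
      cases r using Fin.lastCases with
      | last => exact not_isCell_last_castSucc _ c hcell
      | cast r =>
        cases r' using Fin.lastCases with
        | last => simp at h1
        | cast r' =>
          simp only [isCell_snoc_castSucc, rowHeight_snoc_castSucc,
            extendFilling_castSucc_castSucc] at hcell hr' h0 h1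
          cases c' using Fin.lastCases with
          | last =>
            simp only [extendFilling_apply_last, newColumn_castSucc, decide_eq_true_eq] at h2
            simpa [h1] using (mem_unrestrictedRows.mp (hA h2)).2 c r' hcell h0 hr'
          | cast c' =>
            simp only [extendFilling_castSucc_castSucc] at h2
            simpa [h1] using T.filling_above_eq_false hcell h0 hr' (by simpa using hc') h2
  diag_zero j hj h0 c := by
    cases j using Fin.lastCases with
    | last =>
      cases c using Fin.lastCases with
      | last => exact h0
      | cast c => simp
    | cast j =>
      simp only [Fin.snoc_castSucc, extendFilling_castSucc_castSucc] at hj h0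
      cases c using Fin.lastCases with
      | last =>
        simp only [extendFilling_apply_last, newColumn_castSucc, decide_eq_false_iff_not]
        intro hjA
        simp [(mem_unrestrictedRows.mp (hA hjA)).1 hj] at h0
      | cast c => simpa using T.diag_zero j hj h0 c

section Snoc

variable (T : TypeBTableau n) (d : Bool) (A : Finset (Fin n)) (hA : A ⊆ T.unrestrictedRows)

@[simp]
theorem snoc_west : (T.snoc d A hA).west = Fin.snoc T.west (d || decide A.Nonempty) := rfl

@[simp]
theorem snoc_filling : (T.snoc d A hA).filling = extendFilling T.filling (newColumn d A) := rfl

@[simp]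
theorem dropLast_snoc : (T.snoc d A hA).dropLast = T := by
  ext <;> simp

theorem isUnrestricted_snoc_last :
    (T.snoc d A hA).IsUnrestricted (Fin.last n) ↔ d = true ∨ A = ∅ := by
  have hcells : ∀ c r', IsCell (T.snoc d A hA).west (Fin.last n) c →
      rowHeight (T.snoc d A hA).west (Fin.last n) < rowHeight (T.snoc d A hA).west r' →
      (T.snoc d A hA).filling r' c = false := by
    intro c r' hcell hr'
    cases c using Fin.lastCases with
    | last =>
      by_cases hr : r' = Fin.last n
      · simp [hr] at hr'
      · exact absurd (rowHeight_lt_rowHeight_last _ hcell.1 hr) hr'.not_gt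
    | cast c => exact absurd hcell (not_isCell_last_castSucc _ c)
  rw [IsUnrestricted, and_iff_left fun c r' hcell _ => hcells c r' hcell]
  cases d <;> simp [nonempty_iff_ne_empty]

theorem isUnrestricted_snoc_castSucc (r : Fin n) :
    (T.snoc d A hA).IsUnrestricted r.castSucc ↔ T.IsUnrestricted r ∧
      (r ∈ A ∨ d = false ∧ ∀ b ∈ A, rowHeight T.west b < rowHeight T.west r) := by
  constructor
  · rintro ⟨hdiag, hcells⟩
    refine ⟨⟨fun hw => by simpa using hdiag (by simpa using hw), fun c r' hcell h0 hr' => ?_⟩,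
      or_iff_not_imp_left.mpr fun hrA => ?_⟩
    · simpa using hcells c.castSucc r'.castSucc (by simpa using hcell) (by simpa using h0)
        (by simpa using hr')
    -- the 0 of the new column in row `r` has no 1 above it
    have habove : ∀ r', (T.snoc d A hA).west (Fin.last n) = true →
        rowHeight (T.snoc d A hA).west r.castSucc < rowHeight (T.snoc d A hA).west r' →
        (T.snoc d A hA).filling r' (Fin.last n) = false := fun r' hw hr' =>
      hcells _ r' (isCell_castSucc_last _ hw r) (by simpa using hrA) hr'
    constructor
    · by_contra hd
      simpa [hd] using habove (Fin.last n) (by simp [hd])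
        (rowHeight_lt_rowHeight_last _ (by simp [hd]) (Fin.castSucc_ne_last r))
    · intro b hb
      have hw : (T.snoc d A hA).west (Fin.last n) = true := by simp [show A.Nonempty from ⟨b, hb⟩]
      by_contra hlt
      have hbr : rowHeight T.west r < rowHeight T.west b :=
        (not_lt.mp hlt).lt_of_ne ((rowHeight_injective _).ne (ne_of_mem_of_not_mem hb hrA).symm)
      simpa [hb] using habove b.castSucc hw (by simpa using hbr)
  · rintro ⟨hu, hs⟩
    refine ⟨fun hw => by simpa using hu.1 (by simpa using hw), fun c r' hcell h0 hr' => ?_⟩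
    cases c using Fin.lastCases with
    | last =>
      simp only [snoc_filling, extendFilling_apply_last, newColumn_castSucc,
        decide_eq_false_iff_not] at h0
      obtain ⟨rfl, hbelow⟩ := hs.resolve_left h0
      cases r' using Fin.lastCases with
      | last => simp
      | cast r' =>
        simp only [snoc_filling, extendFilling_apply_last, newColumn_castSucc,
          decide_eq_false_iff_not]
        exact fun hr'A => (hbelow r' hr'A).not_gt (by simpa using hr')
    | cast c =>
      cases r' using Fin.lastCases with
      | last => simp
      | cast r' =>
        simpa using hu.2 c r' (by simpa using hcell) (by simpa using h0) (by simpa using hr')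

theorem card_unrestrictedRows_snoc :
    #(T.snoc d A hA).unrestrictedRows = #A + if d then 1 else
      #{r ∈ T.unrestrictedRows | ∀ b ∈ A, rowHeight T.west b < rowHeight T.west r} +
        if A = ∅ then 1 else 0 := by
  have hsplit : ({r | T.IsUnrestricted r ∧
      (r ∈ A ∨ d = false ∧ ∀ b ∈ A, rowHeight T.west b < rowHeight T.west r)} : Finset (Fin n)) =
      A ∪ {r ∈ T.unrestrictedRows |
        d = false ∧ ∀ b ∈ A, rowHeight T.west b < rowHeight T.west r} := by
    ext r
    have := @hA r
    simp only [mem_unrestrictedRows, mem_filter, mem_univ, true_and, mem_union] at this ⊢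
    tauto
  have hdisj : Disjoint A {r ∈ T.unrestrictedRows |
      d = false ∧ ∀ b ∈ A, rowHeight T.west b < rowHeight T.west r} :=
    disjoint_left.mpr fun r hr h => lt_irrefl _ ((mem_filter.mp h).2.2 r hr)
  rw [unrestrictedRows, Fin.card_filter_univ_castSucc]
  simp only [isUnrestricted_snoc_castSucc, isUnrestricted_snoc_last]
  rw [hsplit, card_union_of_disjoint hdisj]
  cases d <;> simp [add_assoc]

end Snoc

theorem west_last_iff_exists_filling (T : TypeBTableau (n + 1)) :
    T.west (Fin.last n) = true ↔ ∃ r, T.filling r (Fin.last n) = true :=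
  ⟨T.col_one _, fun ⟨r, hr⟩ => (T.support r _ hr).1⟩

def lastColumnRows (T : TypeBTableau (n + 1)) : Finset (Fin n) :=
  {r | T.filling r.castSucc (Fin.last n) = true}

theorem lastColumnRows_subset (T : TypeBTableau (n + 1)) :
    lastColumnRows T ⊆ T.dropLast.unrestrictedRows := by
  intro r hr
  simp only [lastColumnRows, mem_filter, mem_univ, true_and] at hr
  refine mem_unrestrictedRows.mpr ⟨fun hw => ?_, fun c r' hcell h0 hr' => ?_⟩
  · by_contra h
    simpa [hr] using T.diag_zero r.castSucc hw (by simpa using h) (Fin.last n)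
  · exact T.filling_above_eq_false (c := c.castSucc) (r' := r'.castSucc) (c' := Fin.last n)
      ((isCell_dropLast T r c).mp hcell) h0 (by rwa [← rowHeight_dropLast, ← rowHeight_dropLast])
      (Fin.castSucc_lt_last c) hr

theorem snoc_dropLast (T : TypeBTableau (n + 1)) :
    T.dropLast.snoc (T.filling (Fin.last n) (Fin.last n)) (lastColumnRows T)
      (lastColumnRows_subset T) = T := by
  refine ext (funext fun i => ?_) (funext fun r => funext fun c => ?_)
  · cases i using Fin.lastCases with
    | last =>
      rw [snoc_west, Fin.snoc_last, Bool.eq_iff_iff, west_last_iff_exists_filling, Fin.exists_fin_succ']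
      simp [lastColumnRows, Finset.Nonempty, or_comm]
    | cast i => simp
  · cases c using Fin.lastCases with
    | last => cases r using Fin.lastCases <;> simp [lastColumnRows]
    | cast c => cases r using Fin.lastCases <;> simp [filling_last_castSucc]

theorem snoc_bijective : Function.Bijective
    (fun p : Σ T : TypeBTableau n, Bool × {A // A ⊆ T.unrestrictedRows} =>
      p.1.snoc p.2.1 p.2.2.1 p.2.2.2) := by
  refine ⟨?_, fun T => ⟨⟨T.dropLast, _, _, lastColumnRows_subset T⟩, snoc_dropLast T⟩⟩
  rintro ⟨T, d, A, hA⟩ ⟨T', d', A', hA'⟩ h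
  obtain rfl : T = T' := by simpa using congrArg dropLast h
  have hcol : newColumn d A = newColumn d' A' := by
    simpa using congrArg (fun T => (T.filling · (Fin.last n))) h
  obtain rfl : d = d' := by simpa using congrFun hcol (Fin.last n)
  obtain rfl : A = A' := by ext r; simpa using congrFun hcol r.castSucc
  rfl

theorem sum_snoc {M : Type*} [AddCommMonoid M] (F : TypeBTableau (n + 1) → M) :
    ∑ T, F T = ∑ T : TypeBTableau n, ∑ d : Bool,
      ∑ A : {A // A ⊆ T.unrestrictedRows}, F (T.snoc d A A.2) := by
  rw [← (Equiv.ofBijective _ snoc_bijective).sum_comp, Fintype.sum_sigma]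
  simp only [Fintype.sum_prod_type, Equiv.ofBijective_apply]

theorem sum_pow_card_unrestrictedRows_snoc (T : TypeBTableau n) (y : ℝ) :
    ∑ d, ∑ A : {A // A ⊆ T.unrestrictedRows}, y ^ #(T.snoc d A A.2).unrestrictedRows =
      2 * y * (1 + y) ^ #T.unrestrictedRows := by
  simp only [card_unrestrictedRows_snoc, Fintype.sum_bool, if_true, Bool.false_eq_true, if_false]
  rw [← sum_subtype _ (fun _ => mem_powerset) (fun A => y ^ (#A + 1)),
    ← sum_subtype _ (fun _ => mem_powerset) (fun A => y ^ (#A +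
      (#{r ∈ T.unrestrictedRows | ∀ b ∈ A, rowHeight T.west b < rowHeight T.west r} +
        if A = ∅ then 1 else 0)))]
  have h_west : ∑ A ∈ T.unrestrictedRows.powerset, y ^ (#A + 1) =
      y * (1 + y) ^ #T.unrestrictedRows := by
    rw [add_comm 1 y, ← sum_pow_mul_eq_add_pow, mul_sum]
    simp [pow_succ, mul_comm]
  have h_south : ∑ A ∈ T.unrestrictedRows.powerset, y ^ (#A +
      (#{r ∈ T.unrestrictedRows | ∀ b ∈ A, rowHeight T.west b < rowHeight T.west r} +
        if A = ∅ then 1 else 0)) = y * (1 + y) ^ #T.unrestrictedRows := by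
    -- `convert` reconciles `Int.decLt` with the decidability of `<` coming from `LinearOrder ℤ`
    convert sum_powerset_pow_card_add_card_above (rowHeight_injective T.west) _ y
  rw [h_west, h_south]
  ring

noncomputable def genFun (q : TypeBTableau n → ℝ) (y : ℝ) : ℝ :=
  ∑ T, q T * y ^ #T.unrestrictedRows

theorem genFun_comp_dropLast (q : TypeBTableau n → ℝ) (y : ℝ) :
    genFun (fun T => q T.dropLast) y = 2 * y * genFun q (1 + y) := by
  simp only [genFun, sum_snoc, dropLast_snoc, ← mul_sum, sum_pow_card_unrestrictedRows_snoc]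
  rw [mul_sum]
  exact sum_congr rfl fun T _ => by ring

theorem genFun_southLast (q : TypeBTableau n → ℝ) (y : ℝ) :
    genFun (fun T => if T.west (Fin.last n) then 0 else q T.dropLast) y = y * genFun q y := by
  simp only [genFun, sum_snoc, mul_sum]
  refine sum_congr rfl fun T _ => ?_
  simp only [Fintype.sum_bool, snoc_west, Fin.snoc_last, Bool.true_or, if_true, zero_mul,
    sum_const_zero, zero_add]
  rw [Fintype.sum_eq_single ⟨∅, empty_subset _⟩]
  · simp only [dropLast_snoc, card_unrestrictedRows_snoc]
    simp [pow_succ]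
    ring
  · rintro ⟨A, hA⟩ hne
    simp [nonempty_iff_ne_empty.mpr fun h => hne (Subtype.ext h)]

theorem genFun_westLast (q : TypeBTableau n → ℝ) (y : ℝ) :
    genFun (fun T => if T.west (Fin.last n) then q T.dropLast else 0) y =
      2 * y * genFun q (1 + y) - y * genFun q y := by
  rw [← genFun_comp_dropLast, ← genFun_southLast, eq_sub_iff_add_eq, genFun, genFun, genFun,
    ← sum_add_distrib]
  exact sum_congr rfl fun T _ => by split_ifs <;> ring

instance : Unique (TypeBTableau 0) where
  default := ⟨finZeroElim, finZeroElim, finZeroElim, finZeroElim, finZeroElim, finZeroElim⟩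
  uniq _ := ext (funext finZeroElim) (funext finZeroElim)

theorem genFun_one (n : ℕ) (y : ℝ) :
    genFun (fun _ : TypeBTableau n => 1) y = 2 ^ n * (ascPochhammer ℝ n).eval y := by
  induction n generalizing y with
  | zero => simp [genFun, eq_empty_of_isEmpty]
  | succ n ih =>
    rw [genFun_comp_dropLast (fun _ => 1), ih, ascPochhammer_succ_left]
    simp only [Polynomial.eval_mul, Polynomial.eval_X, Polynomial.eval_comp, Polynomial.eval_add,
      Polynomial.eval_one, add_comm y 1]
    ring

theorem card_eq_two_pow_mul_factorial (n : ℕ) : Fintype.card (TypeBTableau n) = 2 ^ n * n ! := by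
  have := genFun_one n 1
  simp only [genFun, one_pow, mul_one, sum_const, card_univ, nsmul_eq_mul,
    ascPochhammer_eval_one] at this
  exact_mod_cast this

def truncate : (m : ℕ) → TypeBTableau (n + m) → TypeBTableau n
  | 0, T => T
  | m + 1, T => truncate m T.dropLast

theorem truncate_west (m : ℕ) (T : TypeBTableau (n + m)) (i : Fin n) :
    (truncate m T).west i = T.west (Fin.castAdd m i) := by
  induction m with
  | zero => rfl
  | succ m ih => exact ih T.dropLast

theorem genFun_comp_truncate (q : TypeBTableau n → ℝ) (m : ℕ) (y : ℝ) :
    genFun (fun T => q (truncate m T)) y =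
      2 ^ m * (ascPochhammer ℝ m).eval y * genFun q (y + m) := by
  induction m generalizing y with
  | zero => simp [truncate]
  | succ m ih =>
    calc genFun (fun T => q (truncate (m + 1) T)) y
        = 2 * y * genFun (fun T => q (truncate m T)) (1 + y) :=
          genFun_comp_dropLast (fun T => q (truncate m T)) y
      _ = _ := by
        rw [ih, ascPochhammer_succ_left]
        simp only [Polynomial.eval_mul, Polynomial.eval_X, Polynomial.eval_comp,
          Polynomial.eval_add, Polynomial.eval_one, add_comm y 1, Nat.cast_succ]
        ring_nf

theorem genFun_west_and_west (a : ℕ) (y : ℝ) :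
    genFun (fun T : TypeBTableau (a + 2) =>
        if T.west ⟨a, by omega⟩ = true ∧ T.west ⟨a + 1, by omega⟩ = true then 1 else 0) y =
      2 ^ a * (2 * y * (2 * (1 + y) * (ascPochhammer ℝ a).eval (1 + (1 + y)) -
          (1 + y) * (ascPochhammer ℝ a).eval (1 + y)) -
        y * (2 * y * (ascPochhammer ℝ a).eval (1 + y) - y * (ascPochhammer ℝ a).eval y)) := by
  have hpair : (fun T : TypeBTableau (a + 2) =>
        if T.west ⟨a, by omega⟩ = true ∧ T.west ⟨a + 1, by omega⟩ = true then (1 : ℝ) else 0) =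
      fun T => if T.west (Fin.last (a + 1)) then
        (if T.dropLast.west (Fin.last a) then 1 else 0) else 0 := by
    funext T
    have e₀ : (⟨a, by omega⟩ : Fin (a + 2)) = (Fin.last a).castSucc := rfl
    have e₁ : (⟨a + 1, by omega⟩ : Fin (a + 2)) = Fin.last (a + 1) := rfl
    by_cases h₀ : T.west (Fin.last a).castSucc <;> by_cases h₁ : T.west (Fin.last (a + 1)) <;>
      simp [e₀, e₁, h₀, h₁]
  have hwest := genFun_westLast (fun T : TypeBTableau (a + 1) =>
    if T.west (Fin.last a) then (1 : ℝ) else 0)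
  have hwest' := genFun_westLast (fun _ : TypeBTableau a => (1 : ℝ))
  simp only [hpair, hwest, hwest', genFun_one]
  ring

theorem card_filter_west_and_west (a m : ℕ) :
    #{T : TypeBTableau (a + 2 + m) | T.west ⟨a, by omega⟩ = true ∧
        T.west ⟨a + 1, by omega⟩ = true} =
      2 ^ (a + m) * (a + m)! * (2 * (2 * a + 1) * (a + m + 1) + (m + 1) ^ 2) := by
  let q : TypeBTableau (a + 2) → ℝ := fun T =>
    if T.west ⟨a, by omega⟩ = true ∧ T.west ⟨a + 1, by omega⟩ = true then 1 else 0
  have hcount : (#{T : TypeBTableau (a + 2 + m) | T.west ⟨a, by omega⟩ = true ∧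
      T.west ⟨a + 1, by omega⟩ = true} : ℝ) = genFun (fun T => q (truncate m T)) 1 := by
    simp only [q, genFun, one_pow, mul_one, truncate_west, card_filter]
    push_cast
    rfl
  rw [← Nat.cast_inj (R := ℝ), hcount, genFun_comp_truncate, genFun_west_and_west,
    ascPochhammer_eval_one]
  have hP : ∀ r : ℕ, (ascPochhammer ℝ a).eval (1 + (r : ℝ)) = (r + a)! / r ! := fun r => by
    rw [eq_div_iff (by positivity), mul_comm, add_comm]
    exact_mod_cast factorial_mul_ascPochhammer ℝ r a
  rw [show (1 : ℝ) + (1 + (1 + m)) = 1 + ((m + 2 : ℕ) : ℝ) by push_cast; ring,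
    show (1 : ℝ) + (1 + m) = 1 + ((m + 1 : ℕ) : ℝ) by push_cast; ring, hP, hP, hP,
    show m + 2 + a = a + m + 1 + 1 by omega, show m + 1 + a = a + m + 1 by omega, add_comm m a]
  simp only [Nat.factorial_succ]
  push_cast
  field_simp
  ring

end TypeBTableau

/-- The number of type-B permutation tableaux of size `n` whose `(k-1)`-th and
`k`-th border steps are both west steps equals
`(k/n - 3/(2n) + (n-k+1)²/(4n(n-1))) · |B_n|`; i.e. for a uniformly random
type-B permutation tableau of size `n`, the probability that steps `k-1` and `k`
are both west is `k/n - 3/(2n) + (n-k+1)²/(4n(n-1))`. -/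
theorem expected_adjacent_west_steps (n k : ℕ) (hk : 2 ≤ k) (hkn : k ≤ n) :
    ((Finset.univ.filter (fun T : TypeBTableau n =>
        T.west ⟨k - 2, by omega⟩ = true ∧ T.west ⟨k - 1, by omega⟩ = true)).card : ℝ) =
      ((k : ℝ) / (n : ℝ) - 3 / (2 * (n : ℝ)) +
        ((n : ℝ) - (k : ℝ) + 1) ^ 2 / (4 * (n : ℝ) * ((n : ℝ) - 1))) *
        (Fintype.card (TypeBTableau n) : ℝ) := by
  obtain ⟨a, rfl⟩ : ∃ a, k = a + 2 := ⟨k - 2, by omega⟩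
  obtain ⟨m, rfl⟩ : ∃ m, n = a + 2 + m := ⟨n - (a + 2), by omega⟩
  simp only [Nat.add_sub_cancel, Nat.reduceSubDiff]
  rw [TypeBTableau.card_filter_west_and_west a m, TypeBTableau.card_eq_two_pow_mul_factorial,
    show a + 2 + m = a + m + 1 + 1 by omega]
  simp only [Nat.factorial_succ]
  push_cast
  have hpos : (a : ℝ) + m + 1 + 1 - 1 ≠ 0 := by rw [add_sub_cancel_right]; positivity
  field_simp
  ring
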